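/- If G is a banana tree and {a_1, ..., a_n} is the multiset of sizes of its edge bunches, then gon(G) ≤ lcm(a_1, ..., a_n). -/

import Mathlib

open Finset

attribute [local instance] Classical.propDecidable

noncomputable section

/-- A finite loopless multigraph on vertex type `V`, given by a symmetric
edge-multiplicity function: `mul u v` is the number of edges joining `u` and `v`. -/
structure Multigraph (V : Type) [Fintype V] where
  mul : V → V → ℕ
  symm : ∀ u v, mul u v = mul v u
  loopless : ∀ v, mul v v = 0

namespace Multigraph

variable {V : Type} [Fintype V]

/-- The underlying simple graph of a multigraph. -/
def underlying (G : Multigraph V) : SimpleGraph V where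
  Adj u v := 0 < G.mul u v
  symm := ⟨by
    intro u v (h : 0 < G.mul u v)
    rwa [G.symm] at h⟩
  loopless := ⟨by
    intro v (h : 0 < G.mul v v)
    simp [G.loopless] at h⟩

/-- A multigraph is connected if its underlying simple graph is. -/
def Connected (G : Multigraph V) : Prop := G.underlying.Connected

/-- A banana tree is a multigraph whose underlying simple graph is a tree. -/
def IsBananaTree (G : Multigraph V) : Prop := G.underlying.IsTree

/-- The valence (degree) of a vertex. -/
def valence (G : Multigraph V) (v : V) : ℕ := ∑ w, G.mul v w

/-- The number of edges of a multigraph. -/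
def edgeCount (G : Multigraph V) : ℕ := (∑ u, ∑ v, G.mul u v) / 2

/-- The genus (first Betti number) `|E| - |V| + 1` of a connected multigraph. -/
def genus (G : Multigraph V) : ℕ := G.edgeCount + 1 - Fintype.card V

/-- The degree of a divisor: the total number of chips. -/
def degree (D : V → ℤ) : ℤ := ∑ v, D v

/-- A divisor is effective if it is nonnegative everywhere. -/
def Effective (D : V → ℤ) : Prop := ∀ v, 0 ≤ D v

/-- Linear equivalence of divisors: `D'` is obtained from `D` by a finite sequence of
chip-firing moves, equivalently (for connected graphs) via an integral firing script `σ`. -/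
def LinEquiv (G : Multigraph V) (D D' : V → ℤ) : Prop :=
  ∃ σ : V → ℤ, ∀ v, D' v = D v + ∑ w, (G.mul v w : ℤ) * (σ w - σ v)

/-- A divisor has positive rank if for every vertex `v` it is linearly equivalent to an
effective divisor placing at least one chip on `v`. -/
def PosRank (G : Multigraph V) (D : V → ℤ) : Prop :=
  ∀ v, ∃ D', G.LinEquiv D D' ∧ Effective D' ∧ 1 ≤ D' v

/-- The (divisorial) gonality: the minimum degree of a positive-rank effective divisor. -/
def gonality (G : Multigraph V) : ℕ :=
  sInf {d : ℕ | ∃ D : V → ℤ, Effective D ∧ G.PosRank D ∧ degree D = (d : ℤ)}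

/-- `f(G, v, k)`: the minimum degree of an effective divisor `D` on `G` such that
`D + k·v` has positive rank. -/
def fmin (G : Multigraph V) (v : V) (k : ℕ) : ℕ :=
  sInf {d : ℕ | ∃ D : V → ℤ, Effective D ∧
    G.PosRank (fun u => D u + if u = v then (k : ℤ) else 0) ∧ degree D = (d : ℤ)}

/-- Delete a vertex from a multigraph. -/
def deleteVertex (G : Multigraph V) (v : V) : Multigraph {u : V // u ≠ v} where
  mul a b := G.mul a.1 b.1
  symm := fun a b => G.symm a.1 b.1
  loopless := fun a => G.loopless a.1

/-- Delete one single edge between `u` and `w` (if any) from a multigraph. -/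
def deleteOneEdge (G : Multigraph V) (u w : V) : Multigraph V where
  mul x y := if (x = u ∧ y = w) ∨ (x = w ∧ y = u) then G.mul x y - 1 else G.mul x y
  symm := by
    intro x y
    by_cases h : (x = u ∧ y = w) ∨ (x = w ∧ y = u)
    · have h' : (y = u ∧ x = w) ∨ (y = w ∧ x = u) := by tauto
      simp [h, h', G.symm x y]
    · have h' : ¬((y = u ∧ x = w) ∨ (y = w ∧ x = u)) := by tauto
      simp [h, h', G.symm x y]
  loopless := by
    intro v
    by_cases h : (v = u ∧ v = w) ∨ (v = w ∧ v = u)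
    · simp [h, G.loopless]
    · simp [h, G.loopless]

/-- The adjacency move from `v` to `w` on a banana tree: the subset-firing move at the
connected component of `v` after removing the `v`-`w` edge bunch.  Its net effect is to
move `|E(v,w)|` chips from `v` to `w`. -/
def adjMove (G : Multigraph V) (v w : V) (D : V → ℤ) : V → ℤ :=
  fun u => if u = v then D u - (G.mul v w : ℤ)
    else if u = w then D u + (G.mul v w : ℤ) else D u

/-- A single legal adjacency move: both divisors are effective and the second is
obtained from the first by an adjacency move between adjacent vertices. -/
def LegalAdjStep (G : Multigraph V) (D D' : V → ℤ) : Prop :=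
  ∃ v w, G.underlying.Adj v w ∧ Effective D ∧ Effective D' ∧ D' = G.adjMove v w D

/-- A scramble: a collection of nonempty vertex sets (eggs), each inducing a connected
subgraph. -/
def IsScramble (G : Multigraph V) (S : Finset (Finset V)) : Prop :=
  ∀ X ∈ S, X.Nonempty ∧ (G.underlying.induce (X : Set V)).Connected

/-- A hitting set of a scramble: a set of vertices meeting every egg. -/
def IsHittingSet (S : Finset (Finset V)) (T : Finset V) : Prop :=
  ∀ X ∈ S, (X ∩ T).Nonempty

/-- The hitting number of a scramble. -/
def hittingNumber (S : Finset (Finset V)) : ℕ∞ :=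
  sInf {t : ℕ∞ | ∃ T : Finset V, IsHittingSet S T ∧ (T.card : ℕ∞) = t}

/-- The simple graph remaining after removing `c u w` of the edges of each bunch. -/
def cutGraph (G : Multigraph V) (c : V → V → ℕ) : SimpleGraph V where
  Adj u w := u ≠ w ∧ c u w < G.mul u w ∧ c w u < G.mul w u
  symm := ⟨fun u w h => ⟨h.1.symm, h.2.2, h.2.1⟩⟩
  loopless := ⟨fun u h => h.1 rfl⟩

/-- `c` describes an egg-cut of the scramble `S`: a set of edges of `G` (given by the
number `c u w` of edges removed from each bunch) whose removal leaves at least two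
connected components each completely containing an egg. -/
def IsEggCut (G : Multigraph V) (S : Finset (Finset V)) (c : V → V → ℕ) : Prop :=
  (∀ u w, c u w = c w u) ∧ (∀ u w, c u w ≤ G.mul u w) ∧
  ∃ X₁ ∈ S, ∃ X₂ ∈ S,
    (∀ x ∈ X₁, ∀ y ∈ X₁, (G.cutGraph c).Reachable x y) ∧
    (∀ x ∈ X₂, ∀ y ∈ X₂, (G.cutGraph c).Reachable x y) ∧
    (∀ x ∈ X₁, ∀ y ∈ X₂, ¬ (G.cutGraph c).Reachable x y)

/-- The egg-cut number of a scramble (`⊤` if no egg-cut exists). -/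
def eggCutNumber (G : Multigraph V) (S : Finset (Finset V)) : ℕ∞ :=
  sInf {t : ℕ∞ | ∃ c : V → V → ℕ, G.IsEggCut S c ∧
    ((∑ u, ∑ w, c u w : ℕ) : ℕ∞) = 2 * t}

/-- The order of a scramble: the minimum of its hitting number and egg-cut number. -/
def scrambleOrder (G : Multigraph V) (S : Finset (Finset V)) : ℕ∞ :=
  min (hittingNumber S) (G.eggCutNumber S)

/-- The scramble number of a multigraph: the maximum order of a scramble on it. -/
def scrambleNumber (G : Multigraph V) : ℕ∞ :=
  sSup {m : ℕ∞ | ∃ S : Finset (Finset V), G.IsScramble S ∧ G.scrambleOrder S = m}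

/-- The weight of a node `t` in a tree-cut decomposition `(T, X)`: the number of vertices
mapped to `t` plus the number of edges routed through `t` with neither endpoint mapped
to `t`. -/
def nodeWeight (G : Multigraph V) {N : Type} [Fintype N] (T : SimpleGraph N)
    (X : V → N) (t : N) : ℕ :=
  (Finset.univ.filter fun v => X v = t).card +
    (∑ u, ∑ w, if X u ≠ t ∧ X w ≠ t ∧
        ¬ (T.deleteEdges {e | t ∈ e}).Reachable (X u) (X w)
      then G.mul u w else 0) / 2

/-- The weight of a link `pq` in a tree-cut decomposition `(T, X)`: the number of edges
of `G` routed through that link. -/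
def linkWeight (G : Multigraph V) {N : Type} (T : SimpleGraph N)
    (X : V → N) (p q : N) : ℕ :=
  (∑ u, ∑ w, if ¬ (T.deleteEdges {s(p, q)}).Reachable (X u) (X w)
    then G.mul u w else 0) / 2

/-- The width of a tree-cut decomposition `(T, X)`: the maximum of all node and link
weights. -/
def tcdWidth (G : Multigraph V) {N : Type} [Fintype N] (T : SimpleGraph N)
    (X : V → N) : ℕ :=
  max (Finset.univ.sup fun t => G.nodeWeight T X t)
      (Finset.univ.sup fun p : N × N =>
        if T.Adj p.1 p.2 then G.linkWeight T X p.1 p.2 else 0)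

/-- The screewidth of a multigraph: the minimum width of a tree-cut decomposition. -/
def screewidth (G : Multigraph V) : ℕ :=
  sInf {w : ℕ | ∃ (m : ℕ) (T : SimpleGraph (Fin m)), T.IsTree ∧
    ∃ X : V → Fin m, G.tcdWidth T X = w}

/-- The banana path on `n+1` vertices `v_0, …, v_n`, with `a i` edges joining
`v_i` and `v_{i+1}` (for `0 ≤ i < n`). -/
def bananaPath (n : ℕ) (a : ℕ → ℕ) : Multigraph (Fin (n + 1)) where
  mul i j := if i.val + 1 = j.val then a i.val else if j.val + 1 = i.val then a j.val else 0
  symm := by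
    intro u v
    try dsimp only
    split_ifs <;> first | rfl | (exfalso; omega)
  loopless := by
    intro v
    have h : ¬ (v.val + 1 = v.val) := by omega
    simp [h]

/-- The banana star with central vertex `Sum.inl ()` and, for each `i : Fin k`,
`r i` leaves joined to the center by `a i` parallel edges. -/
def bananaStar (k : ℕ) (a r : Fin k → ℕ) :
    Multigraph (Unit ⊕ (Σ i : Fin k, Fin (r i))) where
  mul x y :=
    match x, y with
    | Sum.inl _, Sum.inr ⟨i, _⟩ => a i
    | Sum.inr ⟨i, _⟩, Sum.inl _ => a i
    | _, _ => 0
  symm := by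
    intro u v
    rcases u with u | ⟨i, li⟩ <;> rcases v with v | ⟨j, lj⟩ <;> rfl
  loopless := by
    intro v
    rcases v with v | ⟨i, li⟩ <;> rfl

end Multigraph

/-!
Fix a vertex `v₀` and let `L` be the lcm of the bunch sizes. If `v` and `w` are adjacent in the
banana tree, removing their bunch splits the tree into two components; firing the component
of `v` exactly `L / |E(v,w)|` times moves `L` chips from `v` to `w` and changes nothing else.
Along paths, `L · v₀` is therefore equivalent to `L · v` for every vertex `v`, so it has positive
rank and degree `L`.
-/

namespace Multigraph

open SimpleGraph

theorem effective_single {V : Type} (v : V) {k : ℤ} (hk : 0 ≤ k) : Effective (Pi.single v k) := fun u => by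
  by_cases h : u = v <;> simp [h, hk]

variable {V : Type} [Fintype V] {G : Multigraph V}

theorem LinEquiv.refl (G : Multigraph V) (D : V → ℤ) : G.LinEquiv D D :=
  ⟨0, fun v => by simp⟩

theorem LinEquiv.trans {D₁ D₂ D₃ : V → ℤ} (h₁₂ : G.LinEquiv D₁ D₂) (h₂₃ : G.LinEquiv D₂ D₃) :
    G.LinEquiv D₁ D₃ := by
  obtain ⟨σ, hσ⟩ := h₁₂
  obtain ⟨τ, hτ⟩ := h₂₃
  refine ⟨σ + τ, fun v => ?_⟩
  simp only [hτ v, hσ v, add_assoc, ← Finset.sum_add_distrib, Pi.add_apply]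
  congr 2
  ext w
  ring

theorem degree_single (v : V) (k : ℤ) : degree (Pi.single v k) = k := by
  simp [degree]

theorem gonality_le {D : V → ℤ} {d : ℕ} (hD : Effective D) (hrank : G.PosRank D)
    (hdeg : degree D = d) : G.gonality ≤ d :=
  Nat.sInf_le ⟨D, hD, hrank, hdeg⟩

def IsBunchCut (A : Set V) (v w : V) : Prop :=
  v ∈ A ∧ w ∉ A ∧ ∀ x ∈ A, ∀ y ∉ A, G.mul x y ≠ 0 → x = v ∧ y = w

theorem exists_isBunchCut_of_isBridge {v w : V} (h : G.underlying.IsBridge s(v, w)) :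
    ∃ A, G.IsBunchCut A v w := by
  set H := G.underlying.deleteEdges {s(v, w)}
  refine ⟨{u | H.Reachable v u}, Reachable.refl v, isBridge_iff.mp h, fun x hx y hy hxy => ?_⟩
  by_cases he : s(x, y) = s(v, w)
  · rcases Sym2.eq_iff.mp he with hxy' | ⟨rfl, rfl⟩
    · exact hxy'
    · exact absurd hx (isBridge_iff.mp h)
  · have hadj : H.Adj x y := (deleteEdges_adj ..).mpr ⟨Nat.pos_of_ne_zero hxy, he⟩
    exact absurd (hx.trans hadj.reachable) hy

/-- The contribution of the pair `(u, x)` to the effect at `u` of firing `A` a total of `c`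
times. -/
theorem IsBunchCut.mul_indicator_sub {A : Set V} {v w : V} (hA : G.IsBunchCut A v w) (c : ℤ)
    (u x : V) :
    (G.mul u x : ℤ) * (A.indicator (fun _ => c) x - A.indicator (fun _ => c) u) =
      (if u = w ∧ x = v then c * G.mul v w else 0) -
        (if u = v ∧ x = w then c * G.mul v w else 0) := by
  obtain ⟨hv, hw, hcross⟩ := hA
  have hvw : v ≠ w := by rintro rfl; exact hw hv
  by_cases hu : u ∈ A <;> by_cases hx : x ∈ A
  · have : u ≠ w := by rintro rfl; exact hw hu
    have : x ≠ w := by rintro rfl; exact hw hx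
    simp_all
  · have : u ≠ w := by rintro rfl; exact hw hu
    rcases eq_or_ne (G.mul u x) 0 with h0 | h0
    · simp only [h0, Nat.cast_zero, zero_mul, this, false_and, if_false]
      split_ifs <;> simp_all
    · obtain ⟨rfl, rfl⟩ := hcross u hu x hx h0
      simp [hu, hx, hvw, mul_comm]
  · have : u ≠ v := by rintro rfl; exact hu hv
    rcases eq_or_ne (G.mul x u) 0 with h0 | h0
    · simp only [G.symm u x, h0, Nat.cast_zero, zero_mul, this, false_and, if_false]
      split_ifs <;> simp_all
    · obtain ⟨rfl, rfl⟩ := hcross x hx u hu h0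
      simp [hu, hx, hvw.symm, G.symm u x, mul_comm]
  · have : u ≠ v := by rintro rfl; exact hu hv
    have : x ≠ v := by rintro rfl; exact hx hv
    simp_all

theorem IsBunchCut.linEquiv_single {A : Set V} {v w : V} (hA : G.IsBunchCut A v w) (c : ℤ) :
    G.LinEquiv (Pi.single v (c * G.mul v w)) (Pi.single w (c * G.mul v w)) := by
  have hvw : v ≠ w := by rintro rfl; exact hA.2.1 hA.1
  refine ⟨A.indicator fun _ => c, fun u => ?_⟩
  simp only [hA.mul_indicator_sub, Finset.sum_sub_distrib, ite_and, Finset.sum_ite_irrel,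
    Finset.sum_ite_eq', Finset.mem_univ, if_true, Finset.sum_const_zero, Pi.single_apply]
  split_ifs <;> simp_all

theorem linEquiv_single_of_adj (hG : G.underlying.IsAcyclic) {v w : V}
    (h : G.underlying.Adj v w) {L : ℕ} (hL : G.mul v w ∣ L) :
    G.LinEquiv (Pi.single v (L : ℤ)) (Pi.single w (L : ℤ)) := by
  obtain ⟨c, rfl⟩ := hL
  obtain ⟨A, hA⟩ := exists_isBunchCut_of_isBridge (isAcyclic_iff_forall_adj_isBridge.mp hG h)
  simpa [mul_comm] using hA.linEquiv_single c

theorem linEquiv_single_of_reachable (hG : G.underlying.IsAcyclic) {L : ℕ}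
    (hL : ∀ x y, G.underlying.Adj x y → G.mul x y ∣ L) {a b : V}
    (hab : G.underlying.Reachable a b) :
    G.LinEquiv (Pi.single a (L : ℤ)) (Pi.single b (L : ℤ)) := by
  obtain ⟨p⟩ := hab
  induction p with
  | nil => exact LinEquiv.refl G _
  | cons h _ ih => exact (linEquiv_single_of_adj hG h (hL _ _ h)).trans ih

theorem IsBananaTree.posRank_single (hG : G.IsBananaTree) {L : ℕ} (hL0 : 0 < L)
    (hL : ∀ x y, G.underlying.Adj x y → G.mul x y ∣ L) (v₀ : V) :
    G.PosRank (Pi.single v₀ (L : ℤ)) := fun v =>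
  ⟨Pi.single v (L : ℤ),
    linEquiv_single_of_reachable hG.isAcyclic hL (hG.connected.preconnected v₀ v),
    effective_single v (Int.natCast_nonneg L), by simpa using Nat.one_le_of_lt hL0⟩

end Multigraph

open Multigraph in
/-- The gonality of a banana tree is at most the least common multiple of the
sizes of its edge bunches. -/
theorem gonality_le_lcm_edge_bunches
    {V : Type} [Fintype V] (G : Multigraph V) (hG : G.IsBananaTree) :
    G.gonality ≤ (Finset.univ.filter fun p : V × V => 0 < G.mul p.1 p.2).lcm
      (fun p => G.mul p.1 p.2) := by
  set L := (Finset.univ.filter fun p : V × V => 0 < G.mul p.1 p.2).lcm fun p => G.mul p.1 p.2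
  have hL : ∀ x y, G.underlying.Adj x y → G.mul x y ∣ L := fun x y hxy =>
    Finset.dvd_lcm (Finset.mem_filter.mpr ⟨Finset.mem_univ (x, y), hxy⟩)
  have hL0 : 0 < L := by
    refine Nat.pos_of_ne_zero fun h => ?_
    obtain ⟨p, hp, hp0⟩ := Finset.lcm_eq_zero_iff.mp h
    exact (Finset.mem_filter.mp hp).2.ne' hp0
  obtain ⟨v₀⟩ := hG.connected.nonempty
  exact gonality_le (effective_single v₀ (Int.natCast_nonneg L))
    (hG.posRank_single hL0 hL v₀) (degree_single v₀ L)
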